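/- Let J be a strongly stable Artinian monomial ideal in R = k[x_1,…,x_n] and 1 ≤ i ≤ n−1. If α = (α_1,…,α_i) ∈ J_i, then the element (0,…,0,|α|) ∈ ℤ_{≥0}^i also belongs to J_i, and moreover f_{i+1}(α_1,…,α_i) ≤ f_{i+1}(0,…,0,|α|). -/

import Mathlib

/-
Combinatorial framework: a monomial ideal in `k[x_1,…,x_n]` is encoded by its set
of monomials, viewed as exponent vectors in `Fin n → ℕ` (with `x_1,…,x_n`
corresponding to indices `0,…,n-1`).
-/

/-- A monomial ideal: a set of exponent vectors closed under multiplication by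
arbitrary monomials. -/
def IsMonomialIdeal {n : ℕ} (S : Set (Fin n → ℕ)) : Prop :=
  ∀ m ∈ S, ∀ m' : Fin n → ℕ, m + m' ∈ S

/-- `R/J` is a finite-dimensional `k`-vector space iff the set of standard
monomials (the complement of the monomial set of `J`) is finite. -/
def IsArtinianMonomialSet {n : ℕ} (S : Set (Fin n → ℕ)) : Prop :=
  Sᶜ.Finite

/-- Strong stability: if `m ∈ J`, `x_j ∣ m` and `i < j`, then `x_i · m / x_j ∈ J`. -/
def IsStronglyStable {n : ℕ} (S : Set (Fin n → ℕ)) : Prop :=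
  ∀ m ∈ S, ∀ i j : Fin n, i < j → 0 < m j →
    (fun l => if l = i then m i + 1 else if l = j then m j - 1 else m l) ∈ S

/-- `x^a < x^b` in the reverse lexicographic order with `x_1 > ⋯ > x_n`
(used to compare monomials of the same degree): at the last index where the
exponents differ, `a` has the larger exponent. -/
def RevLexLT {n : ℕ} (a b : Fin n → ℕ) : Prop :=
  ∃ j : Fin n, b j < a j ∧ ∀ l : Fin n, j < l → a l = b l

/-- Total degree of a monomial. -/
def mdeg {n : ℕ} (m : Fin n → ℕ) : ℕ := ∑ l, m l

/-- `m` is a minimal (monomial) generator of the monomial ideal `S`. -/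
def IsMinGen {n : ℕ} (S : Set (Fin n → ℕ)) (m : Fin n → ℕ) : Prop :=
  m ∈ S ∧ ∀ m' ∈ S, (∀ l, m' l ≤ m l) → m' = m

/-- Almost reverse lexicographic: `S` contains every monomial that is greater in
reverse lexicographic order than some minimal generator of `S` of the same degree. -/
def AlmostRevLex {n : ℕ} (S : Set (Fin n → ℕ)) : Prop :=
  ∀ M N : Fin n → ℕ, IsMinGen S N → mdeg M = mdeg N → RevLexLT N M → M ∈ S

/-- The exponent vector of `x_1^{α 0} ⋯ x_i^{α (i-1)} · x_{i+1}^t`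
(0-based: positions `0,…,i-1` carry `α`, position `i` carries `t`). -/
def monVec (n i : ℕ) (α : ℕ → ℕ) (t : ℕ) : Fin n → ℕ :=
  fun l => if (l : ℕ) < i then α l else if (l : ℕ) = i then t else 0

/-- `fF S i α = min {t : x_1^{α 0}⋯x_i^{α (i-1)} · x_{i+1}^t ∈ S}`; this is the
paper's `f_{i+1}(α_1,…,α_i)` (0-based `i`, so `fF S 0 _` is the paper's `f_1`). -/
noncomputable def fF {n : ℕ} (S : Set (Fin n → ℕ)) (i : ℕ) (α : ℕ → ℕ) : ℕ :=
  sInf {t | monVec n i α t ∈ S}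

/-- The paper's set `J_i`: tuples `(α_1,…,α_i)` (recorded in positions
`0,…,i-1` and padded by zeros) with `α_1 < f_1` and
`α_j < f_j(α_1,…,α_{j-1})` for `2 ≤ j ≤ i`. -/
def JSet {n : ℕ} (S : Set (Fin n → ℕ)) (i : ℕ) : Set (ℕ → ℕ) :=
  {α | (∀ l, i ≤ l → α l = 0) ∧ ∀ j, j < i → α j < fF S j α}

/-- `|α| = α_1 + ⋯ + α_i`. -/
def asum (i : ℕ) (α : ℕ → ℕ) : ℕ := ∑ j ∈ Finset.range i, α j

/-- The tuple `(0,…,0,s)` of length `i`. -/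
def lastVec (i s : ℕ) : ℕ → ℕ := fun l => if l = i - 1 then s else 0

/-- Reverse lexicographic comparison of `i`-tuples: `x^a < x^b`. -/
def RevLexLT' (a b : ℕ → ℕ) : Prop :=
  ∃ j : ℕ, b j < a j ∧ ∀ l, j < l → a l = b l

/-!
For an Artinian monomial ideal `J` and `i ≥ 1`, `J_i` is exactly the set of exponents `α`
of the first `i` variables with `x^α ∉ J`. Strong stability lets one move exponent weight from
`x_i` to earlier variables without leaving `J`, so `x_i^{|α|} x_{i+1}^t ∈ J` implies
`x^α x_{i+1}^t ∈ J`. With `t = 0` this gives `x_i^{|α|} ∉ J`, i.e. `(0,…,0,|α|) ∈ J_i`;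
with `t = f_{i+1}(0,…,0,|α|)` it gives the inequality.
-/

section

variable {n : ℕ} {S : Set (Fin n → ℕ)}

theorem IsMonomialIdeal.mem_of_le (hS : IsMonomialIdeal S) {m m' : Fin n → ℕ} (hm : m ∈ S)
    (hle : m ≤ m') : m' ∈ S := by
  simpa [add_tsub_cancel_of_le hle] using hS m hm (m' - m)

theorem mdeg_add (m m' : Fin n → ℕ) : mdeg (m + m') = mdeg m + mdeg m' :=
  Finset.sum_add_distrib

theorem mdeg_single (p : Fin n) (a : ℕ) : mdeg (Pi.single p a) = a :=
  Fintype.sum_pi_single' p a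

theorem eq_of_le_of_mdeg_eq {m m' : Fin n → ℕ} (hle : m ≤ m') (hdeg : mdeg m' = mdeg m) :
    m' = m :=
  funext fun l =>
    ((Finset.sum_eq_sum_iff_of_le fun l _ => hle l).1 hdeg.symm l (Finset.mem_univ l)).symm

theorem IsStronglyStable.mem_of_shift_left (hSS : IsStronglyStable S) (p : Fin n)
    {m m' : Fin n → ℕ} (hm : m ∈ S) (hlt : ∀ l < p, m l ≤ m' l)
    (hgt : ∀ l, p < l → m' l = m l) (hdeg : mdeg m' = mdeg m) : m' ∈ S := by
  obtain ⟨d, hd⟩ : ∃ d, m p - m' p = d := ⟨_, rfl⟩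
  induction d generalizing m with
  | zero =>
    have hle : ∀ l, m l ≤ m' l := fun l => by
      rcases lt_trichotomy l p with h | rfl | h
      exacts [hlt l h, by omega, (hgt l h).ge]
    rwa [eq_of_le_of_mdeg_eq hle hdeg]
  | succ d ih =>
    obtain ⟨l, hlp, hl⟩ : ∃ l < p, m l < m' l := by
      by_contra! hge
      have hle : ∀ l, m' l ≤ m l := fun l => by
        rcases lt_trichotomy l p with h | rfl | h
        exacts [hge l h, by omega, (hgt l h).le]
      have := congrFun (eq_of_le_of_mdeg_eq hle hdeg.symm) p
      omega
    set m₁ : Fin n → ℕ := fun l' => if l' = l then m l + 1 else if l' = p then m p - 1 else m l'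
      with hm₁
    have hlp' : l ≠ p := hlp.ne
    have hm₁S : m₁ ∈ S := hSS m hm l p hlp (by omega)
    have hshift : m₁ + Pi.single p 1 = m + Pi.single l 1 := by
      funext l'
      by_cases h₁ : l' = l
      · subst h₁
        simp [hm₁, hlp']
      by_cases h₂ : l' = p
      · subst h₂
        simp only [hm₁, Pi.add_apply, Pi.single_apply, h₁, ↓reduceIte]
        omega
      · simp [hm₁, h₁, h₂]
    have hdeg₁ : mdeg m₁ = mdeg m := by
      have := congrArg mdeg hshift
      simp only [mdeg_add, mdeg_single] at this
      omega
    refine ih hm₁S (fun l' hl' => ?_) (fun l' hl' => ?_) (hdeg.trans hdeg₁.symm) ?_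
    · simp only [hm₁]
      split_ifs with h1 h2
      · exact h1 ▸ hl
      · exact absurd h2 hl'.ne
      · exact hlt l' hl'
    · simp only [hm₁, if_neg (hlp.trans hl').ne', if_neg hl'.ne']
      exact hgt l' hl'
    · simp only [hm₁, if_neg hlp'.symm, ↓reduceIte]
      omega

theorem monVec_mono {i : ℕ} (β : ℕ → ℕ) {t t' : ℕ} (h : t ≤ t') :
    monVec n i β t ≤ monVec n i β t' := fun l => by
  simp only [monVec]
  split_ifs <;> omega

theorem monVec_le_monVec_zero {i j : ℕ} (hji : j < i) (β : ℕ → ℕ) :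
    monVec n j β (β j) ≤ monVec n i β 0 := fun l => by
  simp only [monVec]
  split_ifs <;> first | omega | simp_all

theorem monVec_succ_zero (k : ℕ) (β : ℕ → ℕ) : monVec n (k + 1) β 0 = monVec n k β (β k) := by
  funext l
  simp only [monVec]
  split_ifs <;> first | omega | simp_all

theorem mdeg_monVec {i : ℕ} (hi : i < n) (β : ℕ → ℕ) (t : ℕ) :
    mdeg (monVec n i β t) = asum i β + t := by
  set g : ℕ → ℕ := fun l => if l < i then β l else if l = i then t else 0
  have hbelow : ∑ l ∈ Finset.range i, g l = asum i β :=
    Finset.sum_congr rfl fun l hl => if_pos (Finset.mem_range.1 hl)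
  have habove : ∑ l ∈ Finset.Ico (i + 1) n, g l = 0 := Finset.sum_eq_zero fun l hl => by
    have := (Finset.mem_Ico.1 hl).1
    simp only [g]
    split_ifs <;> omega
  calc mdeg (monVec n i β t) = ∑ l ∈ Finset.range n, g l := Fin.sum_univ_eq_sum_range g n
    _ = ∑ l ∈ Finset.range i, g l + g i + ∑ l ∈ Finset.Ico (i + 1) n, g l := by
      rw [← Finset.sum_range_succ, Finset.sum_range_add_sum_Ico g hi]
    _ = asum i β + t := by simp [hbelow, habove, g]

theorem asum_lastVec (k s : ℕ) : asum (k + 1) (lastVec (k + 1) s) = s := by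
  simp [asum, lastVec, Finset.sum_ite_eq']

theorem monVec_fF_mem (hArt : IsArtinianMonomialSet S) {i : ℕ} (hi : i < n) (β : ℕ → ℕ) :
    monVec n i β (fF S i β) ∈ S := by
  have hinj : Function.Injective (monVec n i β) := fun t t' h => by
    simpa [monVec] using congrFun h ⟨i, hi⟩
  obtain ⟨t, ht⟩ := (hArt.preimage hinj.injOn).exists_notMem
  exact Nat.sInf_mem (⟨t, by simpa using ht⟩ : {t | monVec n i β t ∈ S}.Nonempty)

theorem fF_le_of_mem {i : ℕ} {β : ℕ → ℕ} {t : ℕ} (h : monVec n i β t ∈ S) : fF S i β ≤ t :=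
  Nat.sInf_le h

theorem lt_fF_iff (hS : IsMonomialIdeal S) (hArt : IsArtinianMonomialSet S) {i : ℕ} (hi : i < n)
    {β : ℕ → ℕ} {t : ℕ} : t < fF S i β ↔ monVec n i β t ∉ S :=
  ⟨Nat.notMem_of_lt_sInf, fun h => lt_of_not_ge fun hle =>
    h (hS.mem_of_le (monVec_fF_mem hArt hi β) (monVec_mono β hle))⟩

theorem mem_JSet_succ_iff (hS : IsMonomialIdeal S) (hArt : IsArtinianMonomialSet S) {k : ℕ}
    (hk : k < n) {β : ℕ → ℕ} :
    β ∈ JSet S (k + 1) ↔ (∀ l, k + 1 ≤ l → β l = 0) ∧ monVec n (k + 1) β 0 ∉ S := by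
  refine and_congr_right fun _ => ⟨fun h => ?_, fun h j hj => ?_⟩
  · rw [monVec_succ_zero]
    exact (lt_fF_iff hS hArt hk).1 (h k k.lt_succ_self)
  · exact (lt_fF_iff hS hArt (by omega)).2 fun hj' =>
      h (hS.mem_of_le hj' (monVec_le_monVec_zero hj β))

theorem IsStronglyStable.monVec_mem_of_lastVec (hSS : IsStronglyStable S) {k : ℕ}
    (hk : k + 1 < n) (β : ℕ → ℕ) (t : ℕ)
    (h : monVec n (k + 1) (lastVec (k + 1) (asum (k + 1) β)) t ∈ S) :
    monVec n (k + 1) β t ∈ S := by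
  refine hSS.mem_of_shift_left ⟨k, by omega⟩ h (fun l hl => ?_) (fun l hl => ?_) ?_
  · have hl : (l : ℕ) < k := hl
    simp [monVec, lastVec, hl.ne, hl.le]
  · have hl : k < (l : ℕ) := hl
    simp only [monVec]
    split_ifs <;> omega
  · rw [mdeg_monVec hk, mdeg_monVec hk, asum_lastVec]

end

/-- Lemma, part (2).  Let `J` be a strongly stable Artinian
monomial ideal in `k[x_1,…,x_n]` and `1 ≤ i ≤ n-1`.  If `α ∈ J_i`, then
`(0,…,0,|α|) ∈ J_i` and `f_{i+1}(α) ≤ f_{i+1}(0,…,0,|α|)`. -/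
theorem lastVec_mem_JSet_and_fF_le
    {n : ℕ} (S : Set (Fin n → ℕ))
    (hIdeal : IsMonomialIdeal S) (hArt : IsArtinianMonomialSet S)
    (hSS : IsStronglyStable S)
    (i : ℕ) (hi1 : 1 ≤ i) (hin : i ≤ n - 1)
    (α : ℕ → ℕ) (hα : α ∈ JSet S i) :
    lastVec i (asum i α) ∈ JSet S i ∧
      fF S i α ≤ fF S i (lastVec i (asum i α)) := by
  obtain ⟨k, rfl⟩ : ∃ k, i = k + 1 := ⟨i - 1, by omega⟩
  have hk : k + 1 < n := by omega
  have hxα : monVec n (k + 1) α 0 ∉ S := ((mem_JSet_succ_iff hIdeal hArt (by omega)).1 hα).2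
  refine ⟨(mem_JSet_succ_iff hIdeal hArt (by omega)).2 ⟨fun l hl => ?_, fun h => ?_⟩, ?_⟩
  · simp [lastVec, show l ≠ k by omega]
  · exact hxα (hSS.monVec_mem_of_lastVec hk α 0 h)
  · exact fF_le_of_mem (hSS.monVec_mem_of_lastVec hk α _ (monVec_fF_mem hArt hk _))
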